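/- arXiv:1708.05199 — 5 statements merged into one kernel-verified Lean document; each statement's English description precedes it below -/
import Mathlib

section
/- Let m and n be integers with n ≥ 2 and m − n ≥ 3 such that exactly one of m and n is even. Then W = {v_{1,1}, v_{1,n}, v_{m−1,1}} is a resolving set of the generalized Möbius ladder M_{m,n}; that is, the map sending each vertex v to the triple (d(v, v_{1,1}), d(v, v_{1,n}), d(v, v_{m−1,1})) is injective. -/
/-- The relation generating the edges of the generalized Möbius ladder `M_{m,n}`:
horizontal edges `{(i,j),(i+1,j)}`, vertical edges `{(i,j),(i,j+1)}`, and the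
twisted edges `{(m-1,j),(1,n+1-j)}`. -/
def gmlRel (m n : ℕ) (u v : ℕ × ℕ) : Prop :=
  (u.2 = v.2 ∧ v.1 = u.1 + 1) ∨
  (u.1 = v.1 ∧ v.2 = u.2 + 1) ∨
  (u.1 = m - 1 ∧ v.1 = 1 ∧ u.2 + v.2 = n + 1)

/-- The vertex set `{(i,j) : 1 ≤ i ≤ m-1, 1 ≤ j ≤ n}` of `M_{m,n}`. -/
abbrev GMLVert (m n : ℕ) : Type :=
  {p : ℕ × ℕ // 1 ≤ p.1 ∧ p.1 ≤ m - 1 ∧ 1 ≤ p.2 ∧ p.2 ≤ n}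

/-- The generalized Möbius ladder `M_{m,n}` as a simple graph. -/
def GML (m n : ℕ) : SimpleGraph (GMLVert m n) :=
  SimpleGraph.fromRel (fun u v => gmlRel m n u.val v.val)

/-- `W` is a resolving set of `M_{m,n}`: distinct vertices have distinct
tuples of distances to the elements of `W`. -/
def IsResolving (m n : ℕ) (W : Set (GMLVert m n)) : Prop :=
  ∀ u v : GMLVert m n,
    (∀ w ∈ W, (GML m n).dist u w = (GML m n).dist v w) → u = v

/-- The metric dimension of `M_{m,n}`: the minimum cardinality of a resolving set. -/
noncomputable def metricDim (m n : ℕ) : ℕ :=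
  sInf {k : ℕ | ∃ W : Finset (GMLVert m n), W.card = k ∧ IsResolving m n ↑W}

/-- A potential-function criterion for computing graph distances. -/
lemma dist_eq_of_potential {V : Type*} (G : SimpleGraph V) (f : V → ℕ) (w : V)
    (h0 : f w = 0)
    (hz : ∀ v, f v = 0 → v = w)
    (hdesc : ∀ v, f v ≠ 0 → ∃ u, G.Adj v u ∧ f u + 1 = f v)
    (hlip : ∀ u v, G.Adj u v → f u ≤ f v + 1) :
    ∀ v, G.dist v w = f v := by
  have key : ∀ k v, f v = k → ∃ p : G.Walk v w, p.length = f v := by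
    intro k
    induction k with
    | zero =>
      intro v h
      have hvw := hz v h
      subst hvw
      exact ⟨SimpleGraph.Walk.nil, by simp [h]⟩
    | succ k ih =>
      intro v h
      obtain ⟨u, hadj, hu⟩ := hdesc v (by omega)
      obtain ⟨p, hp⟩ := ih u (by omega)
      exact ⟨SimpleGraph.Walk.cons hadj p, by simp [hp]; omega⟩
  have walk_lb : ∀ {a b : V} (p : G.Walk a b), f a ≤ p.length + f b := by
    intro a b p
    induction p with
    | nil => simp
    | cons h p ih =>
      have := hlip _ _ h
      simp only [SimpleGraph.Walk.length_cons]
      omega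
  intro v
  obtain ⟨p, hp⟩ := key (f v) v rfl
  have hle : G.dist v w ≤ f v := hp ▸ SimpleGraph.dist_le p
  have hre : G.Reachable v w := ⟨p⟩
  obtain ⟨q, hq⟩ := hre.exists_walk_length_eq_dist
  have := walk_lb q
  omega

section formulas

variable (m n : ℕ)

/-- Distance to `(1,1)`. -/
def gf1 (v : GMLVert m n) : ℕ := min (v.val.1 + v.val.2 - 2) (m - v.val.1 + n - v.val.2)

/-- Distance to `(1,n)`. -/
def gf2 (v : GMLVert m n) : ℕ := min (v.val.1 + n - v.val.2 - 1) (m - v.val.1 + v.val.2 - 1)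

/-- Distance to `(m-1,1)`. -/
def gf3 (v : GMLVert m n) : ℕ := min (m - v.val.1 + v.val.2 - 2) (v.val.1 + n - v.val.2)

end formulas

lemma gml_adj_of (m n : ℕ) (u v : GMLVert m n)
    (h : gmlRel m n u.val v.val ∨ gmlRel m n v.val u.val)
    (hne : u.val ≠ v.val) : (GML m n).Adj u v := by
  rw [GML, SimpleGraph.fromRel_adj]
  exact ⟨fun he => hne (by rw [he]), h⟩

lemma gml_lip (m n : ℕ) (hn : 2 ≤ n) (hm : n + 3 ≤ m) (f : GMLVert m n → ℕ)
    (hf : ∀ v : GMLVert m n, f v = min (v.val.1 + v.val.2 - 2) (m - v.val.1 + n - v.val.2))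
    (u v : GMLVert m n) (h : (GML m n).Adj u v) : f u ≤ f v + 1 := by
  rw [GML, SimpleGraph.fromRel_adj] at h
  obtain ⟨-, h⟩ := h
  have hu := u.2
  have hv := v.2
  rw [hf u, hf v]
  simp only [gmlRel] at h
  omega

lemma dist1 (m n : ℕ) (hn : 2 ≤ n) (hm : n + 3 ≤ m) (w : GMLVert m n)
    (hw : w.val = (1, 1)) (v : GMLVert m n) :
    (GML m n).dist v w = gf1 m n v := by
  refine dist_eq_of_potential (GML m n) (gf1 m n) w ?_ ?_ ?_ ?_ v
  · simp [gf1, hw]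
  · intro x hx
    have hb := x.2
    apply Subtype.ext
    rw [hw]
    have : x.val.1 = 1 ∧ x.val.2 = 1 := by
      simp only [gf1] at hx; omega
    exact Prod.ext this.1 this.2
  · rintro ⟨⟨i, j⟩, hb⟩ hne0
    have h1 : 1 ≤ i := hb.1
    have h2 : i ≤ m - 1 := hb.2.1
    have h3 : 1 ≤ j := hb.2.2.1
    have h4 : j ≤ n := hb.2.2.2
    have hval : gf1 m n ⟨(i, j), hb⟩ = min (i + j - 2) (m - i + n - j) := rfl
    rw [hval] at hne0
    by_cases hle : i + j - 2 ≤ m - i + n - j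
    · by_cases hi : 1 < i
      · refine ⟨⟨(i - 1, j), by omega⟩, gml_adj_of m n _ _ ?_ ?_, ?_⟩
        · dsimp only [gmlRel]; omega
        · dsimp only; simp only [ne_eq, Prod.mk.injEq, not_and]; omega
        · show min ((i - 1) + j - 2) (m - (i - 1) + n - j) + 1 =
            min (i + j - 2) (m - i + n - j)
          omega
      · refine ⟨⟨(i, j - 1), by omega⟩, gml_adj_of m n _ _ ?_ ?_, ?_⟩
        · dsimp only [gmlRel]; omega
        · dsimp only; simp only [ne_eq, Prod.mk.injEq, not_and]; omega
        · show min (i + (j - 1) - 2) (m - i + n - (j - 1)) + 1 =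
            min (i + j - 2) (m - i + n - j)
          omega
    · by_cases hi : i < m - 1
      · refine ⟨⟨(i + 1, j), by omega⟩, gml_adj_of m n _ _ ?_ ?_, ?_⟩
        · dsimp only [gmlRel]; omega
        · dsimp only; simp only [ne_eq, Prod.mk.injEq, not_and]; omega
        · show min ((i + 1) + j - 2) (m - (i + 1) + n - j) + 1 =
            min (i + j - 2) (m - i + n - j)
          omega
      · refine ⟨⟨(1, n + 1 - j), by omega⟩, gml_adj_of m n _ _ ?_ ?_, ?_⟩
        · dsimp only [gmlRel]; omega
        · dsimp only; simp only [ne_eq, Prod.mk.injEq, not_and]; omega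
        · show min (1 + (n + 1 - j) - 2) (m - 1 + n - (n + 1 - j)) + 1 =
            min (i + j - 2) (m - i + n - j)
          omega
  · exact gml_lip m n hn hm (gf1 m n) (fun v => rfl)

lemma gml_lip2 (m n : ℕ) (hn : 2 ≤ n) (hm : n + 3 ≤ m) (f : GMLVert m n → ℕ)
    (hf : ∀ v : GMLVert m n, f v = min (v.val.1 + n - v.val.2 - 1) (m - v.val.1 + v.val.2 - 1))
    (u v : GMLVert m n) (h : (GML m n).Adj u v) : f u ≤ f v + 1 := by
  rw [GML, SimpleGraph.fromRel_adj] at h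
  obtain ⟨-, h⟩ := h
  have hu := u.2
  have hv := v.2
  rw [hf u, hf v]
  simp only [gmlRel] at h
  omega

lemma dist2 (m n : ℕ) (hn : 2 ≤ n) (hm : n + 3 ≤ m) (w : GMLVert m n)
    (hw : w.val = (1, n)) (v : GMLVert m n) :
    (GML m n).dist v w = gf2 m n v := by
  refine dist_eq_of_potential (GML m n) (gf2 m n) w ?_ ?_ ?_ ?_ v
  · simp [gf2, hw]
  · intro x hx
    have hb := x.2
    apply Subtype.ext
    rw [hw]
    have : x.val.1 = 1 ∧ x.val.2 = n := by
      simp only [gf2] at hx; omega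
    exact Prod.ext this.1 this.2
  · rintro ⟨⟨i, j⟩, hb⟩ hne0
    have h1 : 1 ≤ i := hb.1
    have h2 : i ≤ m - 1 := hb.2.1
    have h3 : 1 ≤ j := hb.2.2.1
    have h4 : j ≤ n := hb.2.2.2
    have hval : gf2 m n ⟨(i, j), hb⟩ = min (i + n - j - 1) (m - i + j - 1) := rfl
    rw [hval] at hne0
    by_cases hle : i + n - j - 1 ≤ m - i + j - 1
    · by_cases hj : j < n
      · refine ⟨⟨(i, j + 1), by omega⟩, gml_adj_of m n _ _ ?_ ?_, ?_⟩
        · dsimp only [gmlRel]; omega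
        · dsimp only; simp only [ne_eq, Prod.mk.injEq, not_and]; omega
        · show min (i + n - (j + 1) - 1) (m - i + (j + 1) - 1) + 1 =
            min (i + n - j - 1) (m - i + j - 1)
          omega
      · refine ⟨⟨(i - 1, j), by omega⟩, gml_adj_of m n _ _ ?_ ?_, ?_⟩
        · dsimp only [gmlRel]; omega
        · dsimp only; simp only [ne_eq, Prod.mk.injEq, not_and]; omega
        · show min ((i - 1) + n - j - 1) (m - (i - 1) + j - 1) + 1 =
            min (i + n - j - 1) (m - i + j - 1)
          omega
    · by_cases hi : i < m - 1
      · refine ⟨⟨(i + 1, j), by omega⟩, gml_adj_of m n _ _ ?_ ?_, ?_⟩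
        · dsimp only [gmlRel]; omega
        · dsimp only; simp only [ne_eq, Prod.mk.injEq, not_and]; omega
        · show min ((i + 1) + n - j - 1) (m - (i + 1) + j - 1) + 1 =
            min (i + n - j - 1) (m - i + j - 1)
          omega
      · refine ⟨⟨(1, n + 1 - j), by omega⟩, gml_adj_of m n _ _ ?_ ?_, ?_⟩
        · dsimp only [gmlRel]; omega
        · dsimp only; simp only [ne_eq, Prod.mk.injEq, not_and]; omega
        · show min (1 + n - (n + 1 - j) - 1) (m - 1 + (n + 1 - j) - 1) + 1 =
            min (i + n - j - 1) (m - i + j - 1)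
          omega
  · exact gml_lip2 m n hn hm (gf2 m n) (fun v => rfl)

lemma gml_lip3 (m n : ℕ) (hn : 2 ≤ n) (hm : n + 3 ≤ m) (f : GMLVert m n → ℕ)
    (hf : ∀ v : GMLVert m n, f v = min (m - v.val.1 + v.val.2 - 2) (v.val.1 + n - v.val.2))
    (u v : GMLVert m n) (h : (GML m n).Adj u v) : f u ≤ f v + 1 := by
  rw [GML, SimpleGraph.fromRel_adj] at h
  obtain ⟨-, h⟩ := h
  have hu := u.2
  have hv := v.2
  rw [hf u, hf v]
  simp only [gmlRel] at h
  omega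

lemma dist3 (m n : ℕ) (hn : 2 ≤ n) (hm : n + 3 ≤ m) (w : GMLVert m n)
    (hw : w.val = (m - 1, 1)) (v : GMLVert m n) :
    (GML m n).dist v w = gf3 m n v := by
  refine dist_eq_of_potential (GML m n) (gf3 m n) w ?_ ?_ ?_ ?_ v
  · simp [gf3, hw]; omega
  · intro x hx
    have hb := x.2
    apply Subtype.ext
    rw [hw]
    have : x.val.1 = m - 1 ∧ x.val.2 = 1 := by
      simp only [gf3] at hx; omega
    exact Prod.ext this.1 this.2
  · rintro ⟨⟨i, j⟩, hb⟩ hne0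
    have h1 : 1 ≤ i := hb.1
    have h2 : i ≤ m - 1 := hb.2.1
    have h3 : 1 ≤ j := hb.2.2.1
    have h4 : j ≤ n := hb.2.2.2
    have hval : gf3 m n ⟨(i, j), hb⟩ = min (m - i + j - 2) (i + n - j) := rfl
    rw [hval] at hne0
    by_cases hle : m - i + j - 2 ≤ i + n - j
    · by_cases hi : i < m - 1
      · refine ⟨⟨(i + 1, j), by omega⟩, gml_adj_of m n _ _ ?_ ?_, ?_⟩
        · dsimp only [gmlRel]; omega
        · dsimp only; simp only [ne_eq, Prod.mk.injEq, not_and]; omega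
        · show min (m - (i + 1) + j - 2) ((i + 1) + n - j) + 1 =
            min (m - i + j - 2) (i + n - j)
          omega
      · refine ⟨⟨(i, j - 1), by omega⟩, gml_adj_of m n _ _ ?_ ?_, ?_⟩
        · dsimp only [gmlRel]; omega
        · dsimp only; simp only [ne_eq, Prod.mk.injEq, not_and]; omega
        · show min (m - i + (j - 1) - 2) (i + n - (j - 1)) + 1 =
            min (m - i + j - 2) (i + n - j)
          omega
    · by_cases hi : 1 < i
      · refine ⟨⟨(i - 1, j), by omega⟩, gml_adj_of m n _ _ ?_ ?_, ?_⟩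
        · dsimp only [gmlRel]; omega
        · dsimp only; simp only [ne_eq, Prod.mk.injEq, not_and]; omega
        · show min (m - (i - 1) + j - 2) ((i - 1) + n - j) + 1 =
            min (m - i + j - 2) (i + n - j)
          omega
      · refine ⟨⟨(m - 1, n + 1 - j), by omega⟩, gml_adj_of m n _ _ ?_ ?_, ?_⟩
        · dsimp only [gmlRel]; omega
        · dsimp only; simp only [ne_eq, Prod.mk.injEq, not_and]; omega
        · show min (m - (m - 1) + (n + 1 - j) - 2) ((m - 1) + n - (n + 1 - j)) + 1 =
            min (m - i + j - 2) (i + n - j)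
          omega
  · exact gml_lip3 m n hn hm (gf3 m n) (fun v => rfl)

set_option maxHeartbeats 1000000 in
theorem stmt2 (m n : ℕ) (hn : 2 ≤ n) (hm : n + 3 ≤ m) (hpar : Odd (m + n)) :
    Function.Injective (fun v : GMLVert m n =>
      ((GML m n).dist v ⟨(1, 1), by omega⟩,
       (GML m n).dist v ⟨(1, n), by omega⟩,
       (GML m n).dist v ⟨(m - 1, 1), by omega⟩)) := by
  intro u v h
  simp only [Prod.mk.injEq] at h
  rw [dist1 m n hn hm ⟨(1, 1), by omega⟩ rfl u, dist1 m n hn hm ⟨(1, 1), by omega⟩ rfl v,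
      dist2 m n hn hm ⟨(1, n), by omega⟩ rfl u, dist2 m n hn hm ⟨(1, n), by omega⟩ rfl v,
      dist3 m n hn hm ⟨(m - 1, 1), by omega⟩ rfl u, dist3 m n hn hm ⟨(m - 1, 1), by omega⟩ rfl v] at h
  obtain ⟨h1, h2, h3⟩ := h
  have hu := u.2
  have hv := v.2
  simp only [gf1, gf2, gf3] at h1 h2 h3
  obtain ⟨k, hk⟩ := hpar
  have H2 : u.val.1 + v.val.2 = v.val.1 + u.val.2 ∨
      u.val.1 + v.val.1 + n = u.val.2 + v.val.2 + m := by clear h1 h3; omega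
  have H3 : u.val.1 + v.val.2 = v.val.1 + u.val.2 ∨
      u.val.1 + v.val.1 + n + 2 = u.val.2 + v.val.2 + m := by clear h1 h2; omega
  have ht : u.val.1 + v.val.2 = v.val.1 + u.val.2 := by clear h1 h2 h3; omega
  clear h2 h3 H2 H3
  apply Subtype.ext
  apply Prod.ext <;> omega
end

section
/- Let m and n be integers with n ≥ 2 and m − n ≥ 3 such that exactly one of m and n is even (so m + n is odd). Then for every q with 1 ≤ q ≤ n and every i with 1 ≤ i ≤ m−1, the graph distance in M_{m,n} satisfies: d(v_{1,1}, v_{i,q}) = i + q − 2 if 1 ≤ i ≤ (m+n−2q+1)/2, and d(v_{1,1}, v_{i,q}) = m + n − q − i if (m+n−2q+3)/2 ≤ i ≤ m−1. -/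
namespace GMLAux

open SimpleGraph

/-- Membership in the vertex set. -/
abbrev Mem (m n : ℕ) (p : ℕ × ℕ) : Prop :=
  1 ≤ p.1 ∧ p.1 ≤ m - 1 ∧ 1 ≤ p.2 ∧ p.2 ≤ n

lemma mem_mk {m n : ℕ} (a b : ℕ) (h1 : 1 ≤ a) (h2 : a ≤ m - 1) (h3 : 1 ≤ b)
    (h4 : b ≤ n) : Mem m n (a, b) := ⟨h1, h2, h3, h4⟩

lemma mem_elim {m n a b : ℕ} (h : Mem m n (a, b)) :
    1 ≤ a ∧ a ≤ m - 1 ∧ 1 ≤ b ∧ b ≤ n := h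

lemma vert_eq {m n a b c d : ℕ} {h : Mem m n (a, b)} {h' : Mem m n (c, d)}
    (h1 : a = c) (h2 : b = d) :
    (⟨(a, b), h⟩ : GMLVert m n) = ⟨(c, d), h'⟩ := by subst h1; subst h2; rfl

/-- The potential function: a 1-Lipschitz lower bound for the distance to `(1,1)`. -/
def fgml (m n : ℕ) (p : GMLVert m n) : ℕ :=
  min (p.val.1 + p.val.2 - 2) (m + n - p.val.1 - p.val.2)

lemma gml_adj_of {m n : ℕ} {u v : GMLVert m n} (hne : u.val ≠ v.val)
    (h : gmlRel m n u.val v.val ∨ gmlRel m n v.val u.val) : (GML m n).Adj u v := by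
  rw [GML, SimpleGraph.fromRel_adj]
  exact ⟨fun he => hne (congrArg Subtype.val he), h⟩

lemma fgml_lip {m n : ℕ} {u v : GMLVert m n} (h : (GML m n).Adj u v) :
    fgml m n v ≤ fgml m n u + 1 := by
  rw [GML, SimpleGraph.fromRel_adj] at h
  have h2 := h.2
  obtain ⟨⟨a, b⟩, ha1, ha2, ha3, ha4⟩ := u
  obtain ⟨⟨c, d⟩, hc1, hc2, hc3, hc4⟩ := v
  simp only [fgml, gmlRel] at h2 ⊢
  omega

lemma fgml_le_walk {m n : ℕ} {u v : GMLVert m n} (p : (GML m n).Walk u v) :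
    fgml m n v ≤ fgml m n u + p.length := by
  induction p with
  | nil => simp
  | cons h p ih =>
    have := fgml_lip h
    simp only [SimpleGraph.Walk.length_cons]
    omega

lemma walkH (m n : ℕ) : ∀ (k i j : ℕ) (hs : Mem m n (i, j)) (ht : Mem m n (i + k, j)),
    ∃ p : (GML m n).Walk ⟨(i, j), hs⟩ ⟨(i + k, j), ht⟩, p.length = k := by
  intro k
  induction k with
  | zero =>
    intro i j hs ht
    exact ⟨SimpleGraph.Walk.nil.copy rfl (vert_eq (by omega) rfl), by simp⟩
  | succ k ih =>
    intro i j hs ht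
    obtain ⟨e1, e2, e3, e4⟩ := mem_elim hs
    obtain ⟨f1, f2, f3, f4⟩ := mem_elim ht
    have pf : Mem m n (i + 1, j) := mem_mk _ _ (by omega) (by omega) e3 e4
    have pf2 : Mem m n (i + 1 + k, j) := mem_mk _ _ (by omega) (by omega) e3 e4
    have hadj : (GML m n).Adj ⟨(i, j), hs⟩ ⟨(i + 1, j), pf⟩ :=
      gml_adj_of (by intro hh; rw [Prod.mk.injEq] at hh; omega)
        (Or.inl (Or.inl ⟨rfl, rfl⟩))
    obtain ⟨p, hp⟩ := ih (i + 1) j pf pf2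
    refine ⟨(SimpleGraph.Walk.cons hadj p).copy rfl (vert_eq (by omega) rfl), ?_⟩
    rw [SimpleGraph.Walk.length_copy, SimpleGraph.Walk.length_cons, hp]

lemma walkV (m n : ℕ) : ∀ (k i j : ℕ) (hs : Mem m n (i, j)) (ht : Mem m n (i, j + k)),
    ∃ p : (GML m n).Walk ⟨(i, j), hs⟩ ⟨(i, j + k), ht⟩, p.length = k := by
  intro k
  induction k with
  | zero =>
    intro i j hs ht
    exact ⟨SimpleGraph.Walk.nil.copy rfl (vert_eq rfl (by omega)), by simp⟩
  | succ k ih =>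
    intro i j hs ht
    obtain ⟨e1, e2, e3, e4⟩ := mem_elim hs
    obtain ⟨f1, f2, f3, f4⟩ := mem_elim ht
    have pf : Mem m n (i, j + 1) := mem_mk _ _ e1 e2 (by omega) (by omega)
    have pf2 : Mem m n (i, j + 1 + k) := mem_mk _ _ e1 e2 (by omega) (by omega)
    have hadj : (GML m n).Adj ⟨(i, j), hs⟩ ⟨(i, j + 1), pf⟩ :=
      gml_adj_of (by intro hh; rw [Prod.mk.injEq] at hh; omega)
        (Or.inl (Or.inr (Or.inl ⟨rfl, rfl⟩)))
    obtain ⟨p, hp⟩ := ih i (j + 1) pf pf2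
    refine ⟨(SimpleGraph.Walk.cons hadj p).copy rfl (vert_eq rfl (by omega)), ?_⟩
    rw [SimpleGraph.Walk.length_copy, SimpleGraph.Walk.length_cons, hp]

lemma adjT (m n : ℕ) (hn : 2 ≤ n) (hm : n + 3 ≤ m) (hA : Mem m n (1, 1))
    (hB : Mem m n (m - 1, n)) :
    (GML m n).Adj ⟨(1, 1), hA⟩ ⟨(m - 1, n), hB⟩ :=
  gml_adj_of (by intro hh; rw [Prod.mk.injEq] at hh; omega)
    (Or.inr (Or.inr (Or.inr ⟨rfl, rfl, rfl⟩)))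

/-- The walk `(1,1) → (1,q) → (i,q)` of length `i + q - 2`. -/
lemma walk1 (m n q i : ℕ) (hn : 2 ≤ n) (hm : n + 3 ≤ m)
    (hq1 : 1 ≤ q) (hq2 : q ≤ n) (hi1 : 1 ≤ i) (hi2 : i ≤ m - 1)
    (hA : Mem m n (1, 1)) (hB : Mem m n (i, q)) :
    ∃ p : (GML m n).Walk ⟨(1, 1), hA⟩ ⟨(i, q), hB⟩, p.length = i + q - 2 := by
  have hq : Mem m n (1, q) := mem_mk _ _ (by omega) (by omega) hq1 hq2
  have hq' : Mem m n (1, 1 + (q - 1)) := mem_mk _ _ (by omega) (by omega) (by omega) (by omega)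
  have hB' : Mem m n (1 + (i - 1), q) := mem_mk _ _ (by omega) (by omega) hq1 hq2
  obtain ⟨p1, hp1⟩ := walkV m n (q - 1) 1 1 hA hq'
  obtain ⟨p2, hp2⟩ := walkH m n (i - 1) 1 q hq hB'
  refine ⟨(p1.copy rfl (vert_eq rfl (by omega))).append
    (p2.copy rfl (vert_eq (by omega) rfl)), ?_⟩
  rw [SimpleGraph.Walk.length_append, SimpleGraph.Walk.length_copy,
    SimpleGraph.Walk.length_copy, hp1, hp2]
  omega

/-- The walk `(1,1) → (m-1,n) → (m-1,q) → (i,q)` of length `m + n - q - i`. -/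
lemma walk2 (m n q i : ℕ) (hn : 2 ≤ n) (hm : n + 3 ≤ m)
    (hq1 : 1 ≤ q) (hq2 : q ≤ n) (hi1 : 1 ≤ i) (hi2 : i ≤ m - 1)
    (hA : Mem m n (1, 1)) (hB : Mem m n (i, q)) :
    ∃ p : (GML m n).Walk ⟨(1, 1), hA⟩ ⟨(i, q), hB⟩, p.length = m + n - q - i := by
  have hC : Mem m n (m - 1, n) := mem_mk _ _ (by omega) (by omega) (by omega) (by omega)
  have hD : Mem m n (m - 1, q) := mem_mk _ _ (by omega) (by omega) hq1 hq2
  have hD' : Mem m n (i + (m - 1 - i), q) := mem_mk _ _ (by omega) (by omega) hq1 hq2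
  have hC' : Mem m n (m - 1, q + (n - q)) := mem_mk _ _ (by omega) (by omega) (by omega) (by omega)
  obtain ⟨p3, hp3⟩ := walkH m n (m - 1 - i) i q hB hD'
  obtain ⟨p4, hp4⟩ := walkV m n (n - q) (m - 1) q hD hC'
  refine ⟨SimpleGraph.Walk.cons (adjT m n hn hm hA hC)
    (((p3.copy rfl (vert_eq (by omega) rfl)).append
      (p4.copy rfl (vert_eq rfl (by omega)))).reverse), ?_⟩
  rw [SimpleGraph.Walk.length_cons, SimpleGraph.Walk.length_reverse,
    SimpleGraph.Walk.length_append, SimpleGraph.Walk.length_copy,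
    SimpleGraph.Walk.length_copy, hp3, hp4]
  omega

/-- The distance lower bound coming from the potential function. -/
lemma dist_lb (m n q i : ℕ) (hn : 2 ≤ n) (hm : n + 3 ≤ m)
    (hq1 : 1 ≤ q) (hq2 : q ≤ n) (hi1 : 1 ≤ i) (hi2 : i ≤ m - 1)
    (hA : Mem m n (1, 1)) (hB : Mem m n (i, q)) :
    min (i + q - 2) (m + n - i - q) ≤
      (GML m n).dist ⟨(1, 1), hA⟩ ⟨(i, q), hB⟩ := by
  obtain ⟨p0, -⟩ := walk1 m n q i hn hm hq1 hq2 hi1 hi2 hA hB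
  have hreach : (GML m n).Reachable ⟨(1, 1), hA⟩ ⟨(i, q), hB⟩ := ⟨p0⟩
  obtain ⟨p, hp⟩ := hreach.exists_walk_length_eq_dist
  have h := fgml_le_walk p
  rw [hp] at h
  have h0 : fgml m n ⟨(1, 1), hA⟩ = min (1 + 1 - 2) (m + n - 1 - 1) := rfl
  have h1 : fgml m n ⟨(i, q), hB⟩ = min (i + q - 2) (m + n - i - q) := rfl
  rw [h0, h1] at h
  omega

lemma dist_eq1 (m n q i : ℕ) (hn : 2 ≤ n) (hm : n + 3 ≤ m)
    (hq1 : 1 ≤ q) (hq2 : q ≤ n) (hi1 : 1 ≤ i) (hi2 : i ≤ m - 1)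
    (hA : Mem m n (1, 1)) (hB : Mem m n (i, q))
    (hcase : 2 * i + 2 * q ≤ m + n + 2) :
    (GML m n).dist ⟨(1, 1), hA⟩ ⟨(i, q), hB⟩ = i + q - 2 := by
  obtain ⟨p, hp⟩ := walk1 m n q i hn hm hq1 hq2 hi1 hi2 hA hB
  have hub := SimpleGraph.dist_le p
  rw [hp] at hub
  have hlb := dist_lb m n q i hn hm hq1 hq2 hi1 hi2 hA hB
  omega

lemma dist_eq2 (m n q i : ℕ) (hn : 2 ≤ n) (hm : n + 3 ≤ m)
    (hq1 : 1 ≤ q) (hq2 : q ≤ n) (hi1 : 1 ≤ i) (hi2 : i ≤ m - 1)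
    (hA : Mem m n (1, 1)) (hB : Mem m n (i, q))
    (hcase : m + n + 2 ≤ 2 * i + 2 * q) :
    (GML m n).dist ⟨(1, 1), hA⟩ ⟨(i, q), hB⟩ = m + n - q - i := by
  obtain ⟨p, hp⟩ := walk2 m n q i hn hm hq1 hq2 hi1 hi2 hA hB
  have hub := SimpleGraph.dist_le p
  rw [hp] at hub
  have hlb := dist_lb m n q i hn hm hq1 hq2 hi1 hi2 hA hB
  omega

end GMLAux

theorem stmt4 (m n : ℕ) (hn : 2 ≤ n) (hm : n + 3 ≤ m) (hpar : Odd (m + n))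
    (q i : ℕ) (hq1 : 1 ≤ q) (hq2 : q ≤ n) (hi1 : 1 ≤ i) (hi2 : i ≤ m - 1) :
    (i ≤ (m + n - 2 * q + 1) / 2 →
      (GML m n).dist ⟨(1, 1), by omega⟩ ⟨(i, q), by omega⟩ = i + q - 2) ∧
    ((m + n - 2 * q + 3) / 2 ≤ i →
      (GML m n).dist ⟨(1, 1), by omega⟩ ⟨(i, q), by omega⟩ = m + n - q - i) := by
  constructor
  · intro hcase
    exact GMLAux.dist_eq1 m n q i hn hm hq1 hq2 hi1 hi2 _ _ (by omega)
  · intro hcase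
    exact GMLAux.dist_eq2 m n q i hn hm hq1 hq2 hi1 hi2 _ _ (by omega)
end

section
/- Let m and n be integers with n ≥ 2 and m − n ≥ 3 such that exactly one of m and n is even (so m − n is odd). Then for every i with 1 ≤ i ≤ m−1, the graph distance in M_{m,n} satisfies: d(v_{m−1,1}, v_{i,1}) = i + n − 1 if 1 ≤ i ≤ (m−n−1)/2, and d(v_{m−1,1}, v_{i,1}) = m − 1 − i if (m−n+1)/2 ≤ i ≤ m−1. -/
/- ## Auxiliary material -/

lemma gml_adj {m n : ℕ} {u v : GMLVert m n} (hne : u ≠ v)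
    (h : gmlRel m n u.val v.val ∨ gmlRel m n v.val u.val) : (GML m n).Adj u v := by
  rw [GML, SimpleGraph.fromRel_adj]
  exact ⟨hne, h⟩

lemma gml_adj_h {m n : ℕ} (a b : ℕ) (h1 : 1 ≤ a ∧ a ≤ m - 1 ∧ 1 ≤ b ∧ b ≤ n)
    (h2 : 1 ≤ a + 1 ∧ a + 1 ≤ m - 1 ∧ 1 ≤ b ∧ b ≤ n) :
    (GML m n).Adj ⟨(a, b), h1⟩ ⟨(a + 1, b), h2⟩ := by
  apply gml_adj
  · intro h
    have := congrArg (fun x : GMLVert m n => x.val.1) h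
    simp at this
  · left; left; exact ⟨rfl, rfl⟩

lemma gml_adj_v {m n : ℕ} (a b : ℕ) (h1 : 1 ≤ a ∧ a ≤ m - 1 ∧ 1 ≤ b ∧ b ≤ n)
    (h2 : 1 ≤ a ∧ a ≤ m - 1 ∧ 1 ≤ b + 1 ∧ b + 1 ≤ n) :
    (GML m n).Adj ⟨(a, b), h1⟩ ⟨(a, b + 1), h2⟩ := by
  apply gml_adj
  · intro h
    have := congrArg (fun x : GMLVert m n => x.val.2) h
    simp at this
  · left; right; left; exact ⟨rfl, rfl⟩

lemma gml_adj_t {m n : ℕ} (b c : ℕ) (hm : 3 ≤ m) (hbc : b + c = n + 1)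
    (h1 : 1 ≤ m - 1 ∧ m - 1 ≤ m - 1 ∧ 1 ≤ b ∧ b ≤ n)
    (h2 : 1 ≤ 1 ∧ 1 ≤ m - 1 ∧ 1 ≤ c ∧ c ≤ n) :
    (GML m n).Adj ⟨(m - 1, b), h1⟩ ⟨(1, c), h2⟩ := by
  apply gml_adj
  · intro h
    have := congrArg (fun x : GMLVert m n => x.val.1) h
    simp at this
    omega
  · left; right; right; exact ⟨rfl, rfl, hbc⟩

/-- Horizontal walk of length `k` from `(a+k,b)` down to `(a,b)`. -/
lemma gml_walk_h {m n : ℕ} (b : ℕ) (hb1 : 1 ≤ b) (hb2 : b ≤ n) :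
    ∀ (k a : ℕ) (ha : 1 ≤ a) (hak : a + k ≤ m - 1),
    ∃ p : (GML m n).Walk ⟨(a + k, b), by omega⟩ ⟨(a, b), by omega⟩, p.length = k := by
  intro k
  induction k with
  | zero => intro a ha hak; exact ⟨SimpleGraph.Walk.nil, rfl⟩
  | succ k ih =>
    intro a ha hak
    obtain ⟨p, hp⟩ := ih a ha (by omega)
    exact ⟨SimpleGraph.Walk.cons ((gml_adj_h (a + k) b (by omega) (by omega)).symm) p,
      by simp [hp]⟩

/-- Vertical walk of length `k` from `(a,b+k)` down to `(a,b)`. -/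
lemma gml_walk_v {m n : ℕ} (a : ℕ) (ha1 : 1 ≤ a) (ha2 : a ≤ m - 1) :
    ∀ (k b : ℕ) (hb : 1 ≤ b) (hbk : b + k ≤ n),
    ∃ p : (GML m n).Walk ⟨(a, b + k), by omega⟩ ⟨(a, b), by omega⟩, p.length = k := by
  intro k
  induction k with
  | zero => intro b hb hbk; exact ⟨SimpleGraph.Walk.nil, rfl⟩
  | succ k ih =>
    intro b hb hbk
    obtain ⟨p, hp⟩ := ih b hb (by omega)
    exact ⟨SimpleGraph.Walk.cons ((gml_adj_v a (b + k) (by omega) (by omega)).symm) p,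
      by simp [hp]⟩

/-- The potential function used for the distance lower bound:
the minimum of the three candidate route lengths from `(a,b)` to `(i,1)`. -/
def gmlPot (m n i : ℕ) (p : GMLVert m n) : ℤ :=
  min (min ((((p.val.1 : ℤ) - (i : ℤ)).natAbs : ℤ) + (p.val.2 : ℤ) - 1)
        ((m : ℤ) - 1 - p.val.1 + i + n - p.val.2))
      ((m : ℤ) - 1 - i + p.val.1 + n - p.val.2)

lemma gmlPot_lip {m n i : ℕ} (hn : 2 ≤ n) (hm : n + 3 ≤ m) (hi1 : 1 ≤ i) (hi2 : i ≤ m - 1)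
    (x y : GMLVert m n) (hxy : (GML m n).Adj x y) :
    gmlPot m n i x ≤ gmlPot m n i y + 1 := by
  rw [GML, SimpleGraph.fromRel_adj] at hxy
  obtain ⟨-, h⟩ := hxy
  obtain ⟨hx1, hx2, hx3, hx4⟩ := x.2
  obtain ⟨hy1, hy2, hy3, hy4⟩ := y.2
  simp only [gmlPot, gmlRel] at *
  rcases h with (⟨h1, h2⟩ | ⟨h1, h2⟩ | ⟨h1, h2, h3⟩) | (⟨h1, h2⟩ | ⟨h1, h2⟩ | ⟨h1, h2, h3⟩) <;>
    omega

lemma gmlPot_le_length (m n i : ℕ) (hn : 2 ≤ n) (hm : n + 3 ≤ m) (hi1 : 1 ≤ i) (hi2 : i ≤ m - 1) :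
    ∀ {u v : GMLVert m n} (p : (GML m n).Walk u v),
      gmlPot m n i u ≤ (p.length : ℤ) + gmlPot m n i v
  | _, _, SimpleGraph.Walk.nil => by simp
  | _, _, SimpleGraph.Walk.cons h q => by
    have h1 := gmlPot_lip hn hm hi1 hi2 _ _ h
    have h2 := gmlPot_le_length m n i hn hm hi1 hi2 q
    simp only [SimpleGraph.Walk.length_cons]
    push_cast
    omega

theorem stmt6 (m n : ℕ) (hn : 2 ≤ n) (hm : n + 3 ≤ m) (hpar : Odd (m + n))
    (i : ℕ) (hi1 : 1 ≤ i) (hi2 : i ≤ m - 1) :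
    (i ≤ (m - n - 1) / 2 →
      (GML m n).dist ⟨(m - 1, 1), by omega⟩ ⟨(i, 1), by omega⟩ = i + n - 1) ∧
    ((m - n + 1) / 2 ≤ i →
      (GML m n).dist ⟨(m - 1, 1), by omega⟩ ⟨(i, 1), by omega⟩ = m - 1 - i) := by
  -- the two endpoints
  have hu : 1 ≤ (m - 1 : ℕ) ∧ m - 1 ≤ m - 1 ∧ 1 ≤ 1 ∧ 1 ≤ n := by omega
  have ht : 1 ≤ i ∧ i ≤ m - 1 ∧ 1 ≤ 1 ∧ 1 ≤ n := by omega
  -- the direct horizontal walk, of length `m - 1 - i`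
  obtain ⟨pA, hpA⟩ := gml_walk_h (m := m) (n := n) 1 le_rfl (by omega) (m - 1 - i) i hi1 (by omega)
  have eA : (⟨(i + (m - 1 - i), 1), by omega⟩ : GMLVert m n) = ⟨(m - 1, 1), hu⟩ := by
    apply Subtype.ext; simp only [Prod.mk.injEq, and_true, true_and]; omega
  have hubA : (GML m n).dist ⟨(m - 1, 1), hu⟩ ⟨(i, 1), ht⟩ ≤ m - 1 - i := by
    have h := SimpleGraph.dist_le (pA.copy eA rfl)
    simpa [hpA] using h
  -- the walk through the twisted edge, of length `i + n - 1`
  obtain ⟨pV, hpV⟩ := gml_walk_v (m := m) (n := n) 1 le_rfl (by omega) (n - 1) 1 le_rfl (by omega)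
  obtain ⟨pH, hpH⟩ := gml_walk_h (m := m) (n := n) 1 le_rfl (by omega) (i - 1) 1 le_rfl (by omega)
  have eV : (⟨(1, 1 + (n - 1)), by omega⟩ : GMLVert m n) = ⟨(1, n), by omega⟩ := by
    apply Subtype.ext; simp only [Prod.mk.injEq, and_true, true_and]; omega
  have eH : (⟨(1 + (i - 1), 1), by omega⟩ : GMLVert m n) = ⟨(i, 1), ht⟩ := by
    apply Subtype.ext; simp only [Prod.mk.injEq, and_true, true_and]; omega
  have hubB : (GML m n).dist ⟨(m - 1, 1), hu⟩ ⟨(i, 1), ht⟩ ≤ i + n - 1 := by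
    have h := SimpleGraph.dist_le
      (SimpleGraph.Walk.cons (gml_adj_t 1 n (by omega) (by omega) hu (by omega))
        (((pV.copy eV rfl).append ((pH.copy eH rfl).reverse))))
    simp only [SimpleGraph.Walk.length_cons, SimpleGraph.Walk.length_append,
      SimpleGraph.Walk.length_reverse, SimpleGraph.Walk.length_copy, hpV, hpH] at h
    omega
  -- reachability and the lower bound from the potential
  have hreach : (GML m n).Reachable ⟨(m - 1, 1), hu⟩ ⟨(i, 1), ht⟩ := ⟨pA.copy eA rfl⟩
  obtain ⟨p, hp⟩ := hreach.exists_walk_length_eq_dist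
  have hlow := gmlPot_le_length m n i hn hm hi1 hi2 p
  rw [hp] at hlow
  have hpt : gmlPot m n i ⟨(i, 1), ht⟩ = 0 := by
    simp only [gmlPot]
    omega
  rw [hpt, add_zero] at hlow
  simp only [gmlPot] at hlow
  obtain ⟨k, hk⟩ := hpar
  constructor
  · intro hcase
    have : (GML m n).dist ⟨(m - 1, 1), hu⟩ ⟨(i, 1), ht⟩ = i + n - 1 := by omega
    exact this
  · intro hcase
    have : (GML m n).dist ⟨(m - 1, 1), hu⟩ ⟨(i, 1), ht⟩ = m - 1 - i := by omega
    exact this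
end

section
/- Let m and n be integers with n ≥ 2 and m − n ≥ 3 such that exactly one of m and n is even. Then for all i with 2 ≤ i ≤ m−1 and all j with 1 ≤ j ≤ n, the vertices v_{i,j} and v_{m−i+1, n−j+1} of M_{m,n} satisfy d(v_{i,j}, v_{1,1}) = d(v_{m−i+1,n−j+1}, v_{1,1}) and d(v_{i,j}, v_{1,n}) = d(v_{m−i+1,n−j+1}, v_{1,n}); consequently the set {v_{1,1}, v_{1,n}} is not a resolving set of M_{m,n}. -/
/-- The symmetry map of the Möbius ladder fixing the first rung. -/
def gmlFlipFun (m n : ℕ) (hn : 2 ≤ n) (hm : n + 3 ≤ m) :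
    GMLVert m n → GMLVert m n := fun p =>
  if _h : p.val.1 = 1 then p
  else ⟨(m + 1 - p.val.1, n + 1 - p.val.2), by
    obtain ⟨h1, h2, h3, h4⟩ := p.property
    exact ⟨by omega, by omega, by omega, by omega⟩⟩

lemma gmlFlipFun_val (m n : ℕ) (hn : 2 ≤ n) (hm : n + 3 ≤ m) (p : GMLVert m n) :
    (gmlFlipFun m n hn hm p).val =
      if p.val.1 = 1 then p.val else (m + 1 - p.val.1, n + 1 - p.val.2) := by
  unfold gmlFlipFun
  split_ifs with h <;> simp [h]

lemma gmlFlip_invol (m n : ℕ) (hn : 2 ≤ n) (hm : n + 3 ≤ m) :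
    Function.Involutive (gmlFlipFun m n hn hm) := by
  rintro ⟨⟨a, b⟩, h1, h2, h3, h4⟩
  unfold gmlFlipFun
  by_cases ha : a = 1
  · simp [ha]
  · simp only [ha, dif_neg, not_false_iff]
    have : ¬ (m + 1 - a = 1) := by omega
    simp only [this, dif_neg, not_false_iff]
    congr 1
    simp only [Prod.mk.injEq]
    omega

lemma pfst (a b : ℕ) : (a, b).1 = a := rfl
lemma psnd (a b : ℕ) : (a, b).2 = b := rfl

lemma gmlFlip_adj (m n : ℕ) (hn : 2 ≤ n) (hm : n + 3 ≤ m)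
    (u v : GMLVert m n) (h : (GML m n).Adj u v) :
    (GML m n).Adj (gmlFlipFun m n hn hm u) (gmlFlipFun m n hn hm v) := by
  rw [GML, SimpleGraph.fromRel_adj] at h ⊢
  refine ⟨fun hh => h.1 ((gmlFlip_invol m n hn hm).injective hh), ?_⟩
  have hrel := h.2
  obtain ⟨h1, h2, h3, h4⟩ := u.property
  obtain ⟨k1, k2, k3, k4⟩ := v.property
  rw [gmlFlipFun_val, gmlFlipFun_val]
  split_ifs with ha hc hc
  · exact hrel
  · simp only [gmlRel, pfst, psnd] at hrel ⊢
    rcases hrel with (⟨e1, e2⟩ | ⟨e1, e2⟩ | ⟨e1, e2, e3⟩) |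
      (⟨e1, e2⟩ | ⟨e1, e2⟩ | ⟨e1, e2, e3⟩)
    · exact Or.inr (Or.inr (Or.inr ⟨by omega, by omega, by omega⟩))
    · exact absurd e1 (by omega)
    · exact absurd e1 (by omega)
    · exact absurd e2 (by omega)
    · exact absurd e1 (by omega)
    · exact Or.inl (Or.inl ⟨by omega, by omega⟩)
  · simp only [gmlRel, pfst, psnd] at hrel ⊢
    rcases hrel with (⟨e1, e2⟩ | ⟨e1, e2⟩ | ⟨e1, e2, e3⟩) |
      (⟨e1, e2⟩ | ⟨e1, e2⟩ | ⟨e1, e2, e3⟩)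
    · exact absurd e2 (by omega)
    · exact absurd e1 (by omega)
    · exact Or.inr (Or.inl ⟨by omega, by omega⟩)
    · exact Or.inl (Or.inr (Or.inr ⟨by omega, by omega, by omega⟩))
    · exact absurd e1 (by omega)
    · exact absurd e1 (by omega)
  · simp only [gmlRel, pfst, psnd] at hrel ⊢
    rcases hrel with (⟨e1, e2⟩ | ⟨e1, e2⟩ | ⟨e1, e2, e3⟩) |
      (⟨e1, e2⟩ | ⟨e1, e2⟩ | ⟨e1, e2, e3⟩)
    · exact Or.inr (Or.inl ⟨by omega, by omega⟩)
    · exact Or.inr (Or.inr (Or.inl ⟨by omega, by omega⟩))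
    · exact absurd e2 (by omega)
    · exact Or.inl (Or.inl ⟨by omega, by omega⟩)
    · exact Or.inl (Or.inr (Or.inl ⟨by omega, by omega⟩))
    · exact absurd e2 (by omega)

lemma gmlFlip_dist (m n : ℕ) (hn : 2 ≤ n) (hm : n + 3 ≤ m)
    (u v : GMLVert m n) :
    (GML m n).dist (gmlFlipFun m n hn hm u) (gmlFlipFun m n hn hm v) =
      (GML m n).dist u v := by
  let hhom : (GML m n) →g (GML m n) :=
    ⟨gmlFlipFun m n hn hm, fun h => gmlFlip_adj m n hn hm _ _ h⟩
  have key : ∀ x y : GMLVert m n,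
      (GML m n).edist (gmlFlipFun m n hn hm x) (gmlFlipFun m n hn hm y) ≤
        (GML m n).edist x y := by
    intro x y
    rw [SimpleGraph.edist_eq_sInf (u := x)]
    apply le_sInf
    rintro _ ⟨p, rfl⟩
    have hle := SimpleGraph.edist_le (p.map hhom)
    rw [SimpleGraph.Walk.length_map] at hle
    exact hle
  have h1 := key u v
  have h2 := key (gmlFlipFun m n hn hm u) (gmlFlipFun m n hn hm v)
  rw [gmlFlip_invol m n hn hm u, gmlFlip_invol m n hn hm v] at h2
  unfold SimpleGraph.dist
  rw [le_antisymm h1 h2]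

theorem stmt8 (m n : ℕ) (hn : 2 ≤ n) (hm : n + 3 ≤ m) (hpar : Odd (m + n)) :
    (∀ i j : ℕ, ∀ _hi1 : 2 ≤ i, ∀ _hi2 : i ≤ m - 1, ∀ _hj1 : 1 ≤ j, ∀ _hj2 : j ≤ n,
      (GML m n).dist ⟨(i, j), by omega⟩ ⟨(1, 1), by omega⟩ =
        (GML m n).dist ⟨(m - i + 1, n - j + 1), by omega⟩ ⟨(1, 1), by omega⟩ ∧
      (GML m n).dist ⟨(i, j), by omega⟩ ⟨(1, n), by omega⟩ =
        (GML m n).dist ⟨(m - i + 1, n - j + 1), by omega⟩ ⟨(1, n), by omega⟩) ∧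
    ¬ IsResolving m n {⟨(1, 1), by omega⟩, ⟨(1, n), by omega⟩} := by
  have hmain : ∀ i j : ℕ, 2 ≤ i → i ≤ m - 1 → 1 ≤ j → j ≤ n →
      ∀ (hij : 1 ≤ i ∧ i ≤ m - 1 ∧ 1 ≤ j ∧ j ≤ n)
        (hij2 : 1 ≤ m - i + 1 ∧ m - i + 1 ≤ m - 1 ∧ 1 ≤ n - j + 1 ∧ n - j + 1 ≤ n)
        (w : GMLVert m n), w.val.1 = 1 →
      (GML m n).dist (⟨(i, j), hij⟩ : GMLVert m n) w =
        (GML m n).dist (⟨(m - i + 1, n - j + 1), hij2⟩ : GMLVert m n) w := by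
    intro i j hi1 hi2 hj1 hj2 hij hij2 w hw
    have hd := gmlFlip_dist m n hn hm ⟨(i, j), hij⟩ w
    have hfw : gmlFlipFun m n hn hm w = w := by
      unfold gmlFlipFun; simp [hw]
    have hfu : gmlFlipFun m n hn hm ⟨(i, j), hij⟩ =
        ⟨(m - i + 1, n - j + 1), hij2⟩ := by
      unfold gmlFlipFun
      have hne1 : ¬ ((i : ℕ) = 1) := by omega
      simp only [hne1, dif_neg, not_false_iff]
      congr 1
      simp only [Prod.mk.injEq]
      omega
    rw [hfw, hfu] at hd
    omega
  constructor
  · intro i j hi1 hi2 hj1 hj2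
    exact ⟨hmain i j hi1 hi2 hj1 hj2 _ _ ⟨(1, 1), by omega⟩ rfl,
      hmain i j hi1 hi2 hj1 hj2 _ _ ⟨(1, n), by omega⟩ rfl⟩
  · intro hres
    have key := hres ⟨(2, 1), by omega⟩ ⟨(m - 2 + 1, n - 1 + 1), by omega⟩
    have hcontra : (⟨(2, 1), by omega⟩ : GMLVert m n) =
        ⟨(m - 2 + 1, n - 1 + 1), by omega⟩ := by
      apply key
      intro w hw
      rcases hw with hw | hw
      · subst hw
        exact hmain 2 1 le_rfl (by omega) le_rfl (by omega) _ _ ⟨(1, 1), by omega⟩ rfl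
      · simp only [Set.mem_singleton_iff] at hw
        subst hw
        exact hmain 2 1 le_rfl (by omega) le_rfl (by omega) _ _ ⟨(1, n), by omega⟩ rfl
    have hfst := congrArg (fun x : GMLVert m n => x.val.1) hcontra
    simp only at hfst
    omega
end

section
/- Let m and n be integers with n ≥ 2 and m − n ≥ 4 such that m and n have the same parity (so m − n is even). Then the two distinct vertices u = v_{(m−n+2)/2, 2} and w = v_{(m−n+4)/2, 1} of M_{m,n} satisfy d(u, v_{1,1}) = d(w, v_{1,1}), d(u, v_{1,n}) = d(w, v_{1,n}), and d(u, v_{m−1,n}) = d(w, v_{m−1,n}); consequently the set {v_{1,1}, v_{1,n}, v_{m−1,n}} is not a resolving set of M_{m,n}. -/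
lemma gml_adj_s19 {m n : ℕ} {a b : GMLVert m n} :
    (GML m n).Adj a b ↔ a ≠ b ∧ (gmlRel m n a.val b.val ∨ gmlRel m n b.val a.val) := by
  simp [GML, SimpleGraph.fromRel_adj]

lemma walk_lb {m n : ℕ} (f : ℕ × ℕ → ℕ)
    (hf : ∀ a b : GMLVert m n, (GML m n).Adj a b → f a.val ≤ f b.val + 1) :
    ∀ {a b : GMLVert m n} (p : (GML m n).Walk a b), f a.val ≤ f b.val + p.length := by
  intro a b p
  induction p with
  | nil => simp
  | cons h q ih =>
      have := hf _ _ h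
      simp only [SimpleGraph.Walk.length_cons]
      omega

lemma dist_lb {m n : ℕ} (f : ℕ × ℕ → ℕ)
    (hf : ∀ a b : GMLVert m n, (GML m n).Adj a b → f a.val ≤ f b.val + 1)
    {a t : GMLVert m n} (hft : f t.val = 0) (hr : (GML m n).Reachable a t) :
    f a.val ≤ (GML m n).dist a t := by
  obtain ⟨q, hq⟩ := hr.exists_walk_length_eq_dist
  have := walk_lb f hf q
  omega

lemma horiz_walk {m n : ℕ} : ∀ (d : ℕ) (a b : GMLVert m n), a.val.2 = b.val.2 →
    b.val.1 = a.val.1 + d → ∃ p : (GML m n).Walk a b, p.length = d := by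
  intro d
  induction d with
  | zero =>
      intro a b h1 h2
      have : a = b := Subtype.ext (Prod.ext h2.symm h1)
      subst this
      exact ⟨.nil, rfl⟩
  | succ d ih =>
      intro a b h1 h2
      have hb := b.property
      have ha := a.property
      set c : GMLVert m n := ⟨(a.val.1 + 1, a.val.2), by omega⟩ with hc
      have hadj : (GML m n).Adj a c := by
        rw [gml_adj_s19]
        constructor
        · intro h; apply_fun (·.val.1) at h; simp [hc] at h
        · left; left; exact ⟨rfl, rfl⟩
      obtain ⟨p, hp⟩ := ih c b (by simpa [hc]) (by simp [hc]; omega)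
      exact ⟨.cons hadj p, by simp [hp]⟩

lemma vert_walk {m n : ℕ} : ∀ (d : ℕ) (a b : GMLVert m n), a.val.1 = b.val.1 →
    b.val.2 = a.val.2 + d → ∃ p : (GML m n).Walk a b, p.length = d := by
  intro d
  induction d with
  | zero =>
      intro a b h1 h2
      have : a = b := Subtype.ext (Prod.ext h1 h2.symm)
      subst this
      exact ⟨.nil, rfl⟩
  | succ d ih =>
      intro a b h1 h2
      have hb := b.property
      have ha := a.property
      set c : GMLVert m n := ⟨(a.val.1, a.val.2 + 1), by omega⟩ with hc
      have hadj : (GML m n).Adj a c := by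
        rw [gml_adj_s19]
        constructor
        · intro h; apply_fun (·.val.2) at h; simp [hc] at h
        · left; right; left; exact ⟨rfl, rfl⟩
      obtain ⟨p, hp⟩ := ih c b (by simpa [hc]) (by simp [hc]; omega)
      exact ⟨.cons hadj p, by simp [hp]⟩

lemma twist_adj {m n : ℕ} (hm : 3 ≤ m) {a b : GMLVert m n} (h1 : a.val.1 = m - 1)
    (h2 : b.val.1 = 1) (h3 : a.val.2 + b.val.2 = n + 1) : (GML m n).Adj a b := by
  rw [gml_adj_s19]
  constructor
  · intro h; apply_fun (·.val.1) at h; omega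
  · left; right; right; exact ⟨h1, h2, h3⟩

-- potentials
def f1 (m n : ℕ) (p : ℕ × ℕ) : ℕ := min (p.1 + p.2 - 2) (m + n - p.1 - p.2)
def f2 (m n : ℕ) (p : ℕ × ℕ) : ℕ := min (p.1 + n - p.2 - 1) (m - p.1 + p.2 - 1)
def f3 (m n : ℕ) (p : ℕ × ℕ) : ℕ := min (m + n - 1 - p.1 - p.2) (p.1 + p.2 - 1)

section lip
variable {m n : ℕ} (hn : 2 ≤ n) (hm : n + 4 ≤ m)

lemma lip_aux (f : ℕ × ℕ → ℕ)
    (h : ∀ a b : GMLVert m n, gmlRel m n a.val b.val → f a.val ≤ f b.val + 1 ∧ f b.val ≤ f a.val + 1) :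
    ∀ a b : GMLVert m n, (GML m n).Adj a b → f a.val ≤ f b.val + 1 := by
  intro a b hadj
  rw [gml_adj_s19] at hadj
  rcases hadj with ⟨-, hr | hr⟩
  · exact (h a b hr).1
  · exact (h b a hr).2

include hn hm in
lemma lip1 : ∀ a b : GMLVert m n, (GML m n).Adj a b → f1 m n a.val ≤ f1 m n b.val + 1 := by
  apply lip_aux
  intro a b hr
  have ha := a.property; have hb := b.property
  unfold gmlRel at hr
  unfold f1
  omega

include hn hm in
lemma lip2 : ∀ a b : GMLVert m n, (GML m n).Adj a b → f2 m n a.val ≤ f2 m n b.val + 1 := by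
  apply lip_aux
  intro a b hr
  have ha := a.property; have hb := b.property
  unfold gmlRel at hr
  unfold f2
  omega

include hn hm in
lemma lip3 : ∀ a b : GMLVert m n, (GML m n).Adj a b → f3 m n a.val ≤ f3 m n b.val + 1 := by
  apply lip_aux
  intro a b hr
  have ha := a.property; have hb := b.property
  unfold gmlRel at hr
  unfold f3
  omega

end lip


section dists
variable {m n : ℕ} (hn : 2 ≤ n) (hm : n + 4 ≤ m) {c : ℕ} (hc : m + n = c + c)
variable {u w t1 t2 t3 : GMLVert m n}
variable (hu : u.val = ((m - n + 2) / 2, 2)) (hw : w.val = ((m - n + 4) / 2, 1))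
variable (ht1 : t1.val = (1, 1)) (ht2 : t2.val = (1, n)) (ht3 : t3.val = (m - 1, n))

include hn hm hc hu ht1 in
lemma d1u : (GML m n).dist u t1 = (m - n) / 2 + 1 := by
  obtain ⟨a12, ha12⟩ : ∃ a : GMLVert m n, a.val = (1, 2) := ⟨⟨(1, 2), by omega⟩, rfl⟩
  obtain ⟨pa, hpa⟩ := vert_walk 1 t1 a12 (by simp [ht1, ha12]) (by simp [ht1, ha12])
  obtain ⟨pb, hpb⟩ := horiz_walk ((m - n) / 2) a12 u (by simp [ha12, hu]) (by simp [ha12, hu]; omega)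
  obtain ⟨wu1, hlen⟩ : ∃ p : (GML m n).Walk u t1, p.length = (m - n) / 2 + 1 :=
    ⟨(pa.append pb).reverse, by simp [hpa, hpb]⟩
  have h1 := SimpleGraph.dist_le wu1
  have h2 := dist_lb (f1 m n) (lip1 hn hm) (a := u) (t := t1) (by simp [f1, ht1]) ⟨wu1⟩
  simp only [f1, hu, ht1] at h2
  omega

include hn hm hc hw ht1 in
lemma d1w : (GML m n).dist w t1 = (m - n) / 2 + 1 := by
  obtain ⟨pw1, hpw1⟩ := horiz_walk ((m - n + 2) / 2) t1 w (by simp [ht1, hw]) (by simp [ht1, hw]; omega)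
  obtain ⟨ww1, hlen⟩ : ∃ p : (GML m n).Walk w t1, p.length = (m - n + 2) / 2 :=
    ⟨pw1.reverse, by simp [hpw1]⟩
  have h1 := SimpleGraph.dist_le ww1
  have h2 := dist_lb (f1 m n) (lip1 hn hm) (a := w) (t := t1) (by simp [f1, ht1]) ⟨ww1⟩
  simp only [f1, hw, ht1] at h2
  omega

include hn hm hc hu ht2 in
lemma d2u : (GML m n).dist u t2 = (m + n - 4) / 2 := by
  obtain ⟨a12, ha12⟩ : ∃ a : GMLVert m n, a.val = (1, 2) := ⟨⟨(1, 2), by omega⟩, rfl⟩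
  obtain ⟨pb, hpb⟩ := horiz_walk ((m - n) / 2) a12 u (by simp [ha12, hu]) (by simp [ha12, hu]; omega)
  obtain ⟨pv, hpv⟩ := vert_walk (n - 2) a12 t2 (by simp [ha12, ht2]) (by simp [ha12, ht2]; omega)
  obtain ⟨wu2, hlen⟩ : ∃ p : (GML m n).Walk u t2, p.length = (m + n - 4) / 2 :=
    ⟨pb.reverse.append pv, by simp [hpb, hpv]; omega⟩
  have h1 := SimpleGraph.dist_le wu2
  have h2 := dist_lb (f2 m n) (lip2 hn hm) (a := u) (t := t2) (by simp [f2, ht2]) ⟨wu2⟩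
  simp only [f2, hu, ht2] at h2
  omega

include hn hm hc hw ht2 in
lemma d2w : (GML m n).dist w t2 = (m + n - 4) / 2 := by
  obtain ⟨e1, he1⟩ : ∃ a : GMLVert m n, a.val = (m - 1, 1) := ⟨⟨(m - 1, 1), by omega⟩, rfl⟩
  obtain ⟨ph, hph⟩ := horiz_walk ((m + n - 6) / 2) w e1 (by simp [hw, he1]) (by simp [hw, he1]; omega)
  have tw1 : (GML m n).Adj e1 t2 :=
    twist_adj (by omega) (by simp [he1]) (by simp [ht2]) (by simp [he1, ht2]; omega)
  obtain ⟨ww2, hlen⟩ : ∃ p : (GML m n).Walk w t2, p.length = (m + n - 4) / 2 :=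
    ⟨ph.append tw1.toWalk, by simp [hph]; omega⟩
  have h1 := SimpleGraph.dist_le ww2
  have h2 := dist_lb (f2 m n) (lip2 hn hm) (a := w) (t := t2) (by simp [f2, ht2]) ⟨ww2⟩
  simp only [f2, hw, ht2] at h2
  omega

include hn hm hc hu ht1 ht3 in
lemma d3u : (GML m n).dist u t3 = min ((m + 3 * n - 8) / 2) ((m - n + 4) / 2) := by
  obtain ⟨a12, ha12⟩ : ∃ a : GMLVert m n, a.val = (1, 2) := ⟨⟨(1, 2), by omega⟩, rfl⟩
  obtain ⟨e2, he2⟩ : ∃ a : GMLVert m n, a.val = (m - 1, 2) := ⟨⟨(m - 1, 2), by omega⟩, rfl⟩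
  obtain ⟨pa, hpa⟩ := vert_walk 1 t1 a12 (by simp [ht1, ha12]) (by simp [ht1, ha12])
  obtain ⟨pb, hpb⟩ := horiz_walk ((m - n) / 2) a12 u (by simp [ha12, hu]) (by simp [ha12, hu]; omega)
  obtain ⟨pA, hpA⟩ := horiz_walk ((m + n - 4) / 2) u e2 (by simp [hu, he2]) (by simp [hu, he2]; omega)
  obtain ⟨pB, hpB⟩ := vert_walk (n - 2) e2 t3 (by simp [he2, ht3]) (by simp [he2, ht3]; omega)
  have tw2 : (GML m n).Adj t1 t3 :=
    (twist_adj (m := m) (n := n) (by omega) (by simp [ht3]) (by simp [ht1])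
      (by simp [ht3, ht1])).symm
  obtain ⟨wa, hwa⟩ : ∃ p : (GML m n).Walk u t3, p.length = (m + 3 * n - 8) / 2 :=
    ⟨pA.append pB, by simp [hpA, hpB]; omega⟩
  obtain ⟨wb, hwb⟩ : ∃ p : (GML m n).Walk u t3, p.length = (m - n + 4) / 2 :=
    ⟨(pb.reverse.append pa.reverse).append tw2.toWalk, by simp [hpb, hpa]; omega⟩
  have h1 := SimpleGraph.dist_le wa
  have h1' := SimpleGraph.dist_le wb
  have h2 := dist_lb (f3 m n) (lip3 hn hm) (a := u) (t := t3) (by simp [f3, ht3]; omega) ⟨wa⟩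
  simp only [f3, hu, ht3] at h2
  omega

include hn hm hc hw ht1 ht3 in
lemma d3w : (GML m n).dist w t3 = min ((m + 3 * n - 8) / 2) ((m - n + 4) / 2) := by
  obtain ⟨e1, he1⟩ : ∃ a : GMLVert m n, a.val = (m - 1, 1) := ⟨⟨(m - 1, 1), by omega⟩, rfl⟩
  obtain ⟨ph, hph⟩ := horiz_walk ((m + n - 6) / 2) w e1 (by simp [hw, he1]) (by simp [hw, he1]; omega)
  obtain ⟨pC, hpC⟩ := vert_walk (n - 1) e1 t3 (by simp [he1, ht3]) (by simp [he1, ht3]; omega)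
  obtain ⟨pw1, hpw1⟩ := horiz_walk ((m - n + 2) / 2) t1 w (by simp [ht1, hw]) (by simp [ht1, hw]; omega)
  have tw2 : (GML m n).Adj t1 t3 :=
    (twist_adj (m := m) (n := n) (by omega) (by simp [ht3]) (by simp [ht1])
      (by simp [ht3, ht1])).symm
  obtain ⟨wa, hwa⟩ : ∃ p : (GML m n).Walk w t3, p.length = (m + 3 * n - 8) / 2 :=
    ⟨ph.append pC, by simp [hph, hpC]; omega⟩
  obtain ⟨wb, hwb⟩ : ∃ p : (GML m n).Walk w t3, p.length = (m - n + 4) / 2 :=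
    ⟨pw1.reverse.append tw2.toWalk, by simp [hpw1]; omega⟩
  have h1 := SimpleGraph.dist_le wa
  have h1' := SimpleGraph.dist_le wb
  have h2 := dist_lb (f3 m n) (lip3 hn hm) (a := w) (t := t3) (by simp [f3, ht3]; omega) ⟨wa⟩
  simp only [f3, hw, ht3] at h2
  omega

end dists

theorem stmt19 (m n : ℕ) (hn : 2 ≤ n) (hm : n + 4 ≤ m) (hpar : Even (m + n)) :
    letI u : GMLVert m n := ⟨((m - n + 2) / 2, 2), by omega⟩
    letI w : GMLVert m n := ⟨((m - n + 4) / 2, 1), by omega⟩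
    u ≠ w ∧
    (GML m n).dist u ⟨(1, 1), by omega⟩ = (GML m n).dist w ⟨(1, 1), by omega⟩ ∧
    (GML m n).dist u ⟨(1, n), by omega⟩ = (GML m n).dist w ⟨(1, n), by omega⟩ ∧
    (GML m n).dist u ⟨(m - 1, n), by omega⟩ = (GML m n).dist w ⟨(m - 1, n), by omega⟩ ∧
    ¬ IsResolving m n {⟨(1, 1), by omega⟩, ⟨(1, n), by omega⟩, ⟨(m - 1, n), by omega⟩} := by
  obtain ⟨c, hc⟩ := hpar
  have h1 := (d1u hn hm hc (u := ⟨((m - n + 2) / 2, 2), by omega⟩)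
      (t1 := ⟨(1, 1), by omega⟩) rfl rfl).trans
    (d1w hn hm hc (w := ⟨((m - n + 4) / 2, 1), by omega⟩) (t1 := ⟨(1, 1), by omega⟩) rfl rfl).symm
  have h2 := (d2u hn hm hc (u := ⟨((m - n + 2) / 2, 2), by omega⟩)
      (t2 := ⟨(1, n), by omega⟩) rfl rfl).trans
    (d2w hn hm hc (w := ⟨((m - n + 4) / 2, 1), by omega⟩) (t2 := ⟨(1, n), by omega⟩) rfl rfl).symm
  have h3 := (d3u hn hm hc (u := ⟨((m - n + 2) / 2, 2), by omega⟩)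
      (t1 := ⟨(1, 1), by omega⟩) (t3 := ⟨(m - 1, n), by omega⟩) rfl rfl rfl).trans
    (d3w hn hm hc (w := ⟨((m - n + 4) / 2, 1), by omega⟩)
      (t1 := ⟨(1, 1), by omega⟩) (t3 := ⟨(m - 1, n), by omega⟩) rfl rfl rfl).symm
  have hne : (⟨((m - n + 2) / 2, 2), by omega⟩ : GMLVert m n) ≠ ⟨((m - n + 4) / 2, 1), by omega⟩ := by
    intro h
    rw [Subtype.ext_iff] at h
    have := congrArg Prod.snd h
    simp only [] at this
    omega
  refine ⟨hne, h1, h2, h3, ?_⟩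
  intro hres
  refine hne (hres _ _ (fun x hx => ?_))
  simp only [Set.mem_insert_iff, Set.mem_singleton_iff] at hx
  rcases hx with rfl | rfl | rfl
  · exact h1
  · exact h2
  · exact h3
end
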